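/- If a graph G on n vertices has a tree decomposition of width k whose tree is a rooted full binary tree of depth O(log n), then the tree-depth of G is O(k · log n). Consequently, tree-depth of G is at most c · (treewidth(G)+1) · log n for some absolute constant c (using that any tree admits a logarithmic-depth tree decomposition of constant width). -/

import Mathlib

/-!
Let `k + 1` bound the bag sizes. If the tree of the decomposition is rooted with depth `d`, hang
every vertex at its topmost bag and replace each node of the tree by a path through the vertices
hung there. The endpoints of an edge hang at two ancestors of a bag containing both, so they are
comparable, and a chain meets at most `d` nodes with at most `k + 1` vertices each.

For an arbitrary tree decomposition, a bag minimising the total distance to the bags of the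
vertices of a set `S` splits `S` minus the bag into parts with no edges between them and at
most `|S| / 2` vertices each. Placing the at most `k + 1` vertices of the bag above recursive
decompositions of the parts gives depth `(k + 1) (log₂ n + 1)`.
-/

/-- A tree-depth decomposition of `G`: identifying (via the bijection μ) the nodes of the
rooted forest with the vertices, it is given by the ancestor-or-equal relation `le`,
a partial order in which the ancestors of any element form a chain, and such that the
endpoints of every edge of `G` are comparable. -/
structure TreeDepthDecomp {V : Type} (G : SimpleGraph V) where
  le : V → V → Prop
  le_refl : ∀ a, le a a
  le_trans : ∀ {a b c}, le a b → le b c → le a c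
  le_antisymm : ∀ {a b}, le a b → le b a → a = b
  ancestors_chain : ∀ {a b c}, le a c → le b c → le a b ∨ le b a
  adj_comparable : ∀ {u w}, G.Adj u w → le u w ∨ le w u

/-- The decomposition has depth at most `d`: every chain (in particular every
root-to-leaf path) has at most `d` nodes. -/
def TreeDepthDecomp.DepthLE {V : Type} {G : SimpleGraph V}
    (D : TreeDepthDecomp G) (d : ℕ) : Prop :=
  ∀ s : Finset V, (∀ a ∈ s, ∀ b ∈ s, D.le a b ∨ D.le b a) → s.card ≤ d
/-- A tree decomposition of `G` over the tree `T`: bags indexed by the nodes of `T`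
covering all vertices and edges, with each vertex's set of bags inducing a connected
subtree of `T`. -/
structure TreeDecomp {V ι : Type} (G : SimpleGraph V) (T : SimpleGraph ι) where
  isTree : T.IsTree
  bags : ι → Finset V
  covers_vertex : ∀ v, ∃ i, v ∈ bags i
  covers_edge : ∀ {u w}, G.Adj u w → ∃ i, u ∈ bags i ∧ w ∈ bags i
  bags_connected : ∀ v, (T.induce {i | v ∈ bags i}).Connected
/-- `G` has treewidth at most `k`: some tree decomposition has all bags of size at most `k+1`. -/
def TreewidthLE {V : Type} (G : SimpleGraph V) (k : ℕ) : Prop :=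
  ∃ (ι : Type) (T : SimpleGraph ι) (D : TreeDecomp G T), ∀ i, (D.bags i).card ≤ k + 1

/-- The rooted full binary tree of depth `d`, as a graph: nodes are lists of booleans of
length `< d` (the root is `[]`), and each node `a` is adjacent to its children `x :: a`. -/
def fullBinTree (d : ℕ) : SimpleGraph {l : List Bool // l.length < d} :=
  SimpleGraph.fromRel fun a b => ∃ x : Bool, b.1 = x :: a.1

open Finset

/-- A rooted forest on `ι` is encoded as a tree-depth decomposition of the edgeless graph.
The decomposition of `G` replaces each node `i` by a path through the vertices `v` with
`f v = i`. -/
theorem TreeDepthDecomp.exists_of_forest {V ι : Type} {G : SimpleGraph V}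
    (F : TreeDepthDecomp (⊥ : SimpleGraph ι)) {d : ℕ} (hF : F.DepthLE d)
    (bags : ι → Finset V) {m : ℕ} (hm : ∀ i, #(bags i) ≤ m) (f : V → ι)
    (hf : ∀ v, v ∈ bags (f v))
    (hadj : ∀ {u w}, G.Adj u w → F.le (f u) (f w) ∨ F.le (f w) (f u)) :
    ∃ D : TreeDepthDecomp G, D.DepthLE (m * d) := by
  classical
  let _ : LinearOrder V := linearOrderOfSTO WellOrderingRel
  have lift : ∀ {u w}, F.le (f u) (f w) ∨ F.le (f w) (f u) →
      (F.le (f u) (f w) ∧ (f u = f w → u ≤ w)) ∨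
        (F.le (f w) (f u) ∧ (f w = f u → w ≤ u)) := by
    intro u w h
    by_cases he : f u = f w
    · rcases le_total u w with huw | hwu
      · exact .inl ⟨he ▸ F.le_refl _, fun _ => huw⟩
      · exact .inr ⟨he ▸ F.le_refl _, fun _ => hwu⟩
    · exact h.imp (⟨·, fun h => absurd h he⟩) (⟨·, fun h => absurd h.symm he⟩)
  refine ⟨⟨fun u w => F.le (f u) (f w) ∧ (f u = f w → u ≤ w),
    fun _ => ⟨F.le_refl _, fun _ => le_rfl⟩,
    ?_, ?_, fun hac hbc => lift (F.ancestors_chain hac.1 hbc.1), fun h => lift (hadj h)⟩, ?_⟩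
  · rintro a b c ⟨hab, hab'⟩ ⟨hbc, hbc'⟩
    refine ⟨F.le_trans hab hbc, fun hac => ?_⟩
    have hba : f b = f a := F.le_antisymm (by rwa [hac]) hab
    exact (hab' hba.symm).trans (hbc' (hba.trans hac))
  · rintro a b ⟨hab, hab'⟩ ⟨hba, hba'⟩
    have he := F.le_antisymm hab hba
    exact _root_.le_antisymm (hab' he) (hba' he.symm)
  · intro s hs
    have himage : #(s.image f) ≤ d := hF _ fun i hi j hj => by
      obtain ⟨a, ha, rfl⟩ := mem_image.1 hi
      obtain ⟨b, hb, rfl⟩ := mem_image.1 hj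
      exact (hs a ha b hb).imp And.left And.left
    calc #s ≤ m * #(s.image f) := card_le_mul_card_image s m fun i _ =>
          (card_le_card fun v hv => (mem_filter.1 hv).2 ▸ hf v).trans (hm i)
      _ ≤ m * d := Nat.mul_le_mul_left m himage

namespace fullBinTree

def rootedForest (d : ℕ) :
    TreeDepthDecomp (⊥ : SimpleGraph {l : List Bool // l.length < d}) where
  le a b := a.1 <:+ b.1
  le_refl _ := List.suffix_refl _
  le_trans := List.IsSuffix.trans
  le_antisymm h h' := Subtype.ext (h.eq_of_length_le h'.length_le)
  ancestors_chain := List.suffix_or_suffix_of_suffix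
  adj_comparable h := h.elim

theorem depthLE_rootedForest (d : ℕ) : (rootedForest d).DepthLE d := by
  intro s hs
  have hinj : Set.InjOn (fun a : {l : List Bool // l.length < d} => a.1.length) s :=
    fun a ha b hb he => by
      rcases hs a ha b hb with h | h
      · exact Subtype.ext (List.IsSuffix.eq_of_length h he)
      · exact (Subtype.ext (List.IsSuffix.eq_of_length h he.symm)).symm
  calc #s = #(s.image fun a => a.1.length) := (card_image_of_injOn hinj).symm
    _ ≤ #(range d) := card_le_card fun n hn => by
      obtain ⟨a, -, rfl⟩ := mem_image.1 hn
      exact mem_range.2 a.2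
    _ = d := card_range d

theorem suffix_of_preconnected {d : ℕ} {A : Set {l : List Bool // l.length < d}}
    (hA : ((fullBinTree d).induce A).Preconnected) {r : {l : List Bool // l.length < d}}
    (hr : r ∈ A) (hmin : ∀ j ∈ A, r.1.length ≤ j.1.length)
    {s : {l : List Bool // l.length < d}} (hs : s ∈ A) : r.1 <:+ s.1 := by
  suffices key :
      ∀ a b : A, ((fullBinTree d).induce A).Walk a b → r.1 <:+ a.1.1 → r.1 <:+ b.1.1
    from key ⟨r, hr⟩ ⟨s, hs⟩ (hA _ _).some (List.suffix_refl _)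
  intro a b p
  induction p with
  | nil => exact id
  | @cons x y z hxy _ ih =>
    intro hx
    apply ih
    have hxy : (fullBinTree d).Adj x.1 y.1 := hxy
    rw [fullBinTree, SimpleGraph.fromRel_adj] at hxy
    rcases hxy.2 with ⟨c, hc⟩ | ⟨c, hc⟩
    · rw [hc]
      exact hx.trans (List.suffix_cons c _)
    · rw [hc, List.suffix_cons_iff] at hx
      refine hx.resolve_left fun h => ?_
      have hlen := congrArg List.length h
      simp only [List.length_cons] at hlen
      have := hmin _ y.2
      omega

end fullBinTree

theorem TreeDecomp.exists_top_bag {V : Type} {G : SimpleGraph V} {d : ℕ}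
    (D : TreeDecomp G (fullBinTree d)) (v : V) :
    ∃ i, v ∈ D.bags i ∧ ∀ j, v ∈ D.bags j → i.1 <:+ j.1 := by
  have hne : {i | v ∈ D.bags i}.Nonempty := D.covers_vertex v
  have hmem := Function.argminOn_mem (fun i => i.1.length) _ hne
  exact ⟨_, hmem, fun j hj => fullBinTree.suffix_of_preconnected
    (D.bags_connected v).preconnected hmem
    (fun i hi => Function.argminOn_le (fun i => i.1.length) _ hi) hj⟩

theorem TreeDecomp.exists_treeDepthDecomp_of_fullBinTree {V : Type} {G : SimpleGraph V}
    {k d : ℕ} (D : TreeDecomp G (fullBinTree d)) (hk : ∀ t, #(D.bags t) ≤ k + 1) :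
    ∃ D' : TreeDepthDecomp G, D'.DepthLE ((k + 1) * d) := by
  choose top htop hsuffix using D.exists_top_bag
  refine TreeDepthDecomp.exists_of_forest _ (fullBinTree.depthLE_rootedForest d) D.bags hk top htop
    fun h => ?_
  obtain ⟨i, hu, hw⟩ := D.covers_edge h
  exact List.suffix_or_suffix_of_suffix (hsuffix _ i hu) (hsuffix _ i hw)

/-- A tree-depth decomposition of `G[S]`, as a relation on `V` supported on `S`. -/
structure TreeDepthDecompOn {V : Type*} (G : SimpleGraph V) (S : Finset V) where
  le : V → V → Prop
  mem_of_le : ∀ {a b}, le a b → a ∈ S ∧ b ∈ S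
  le_refl : ∀ a ∈ S, le a a
  le_trans : ∀ {a b c}, le a b → le b c → le a c
  le_antisymm : ∀ {a b}, le a b → le b a → a = b
  ancestors_chain : ∀ {a b c}, le a c → le b c → le a b ∨ le b a
  adj_comparable : ∀ {u w}, u ∈ S → w ∈ S → G.Adj u w → le u w ∨ le w u

def TreeDepthDecompOn.DepthLE {V : Type*} {G : SimpleGraph V} {S : Finset V}
    (D : TreeDepthDecompOn G S) (d : ℕ) : Prop :=
  ∀ s : Finset V, (∀ a ∈ s, ∀ b ∈ s, D.le a b ∨ D.le b a) → #s ≤ d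

def TreeDepthOnLE {V : Type*} (G : SimpleGraph V) (S : Finset V) (d : ℕ) : Prop :=
  ∃ D : TreeDepthDecompOn G S, D.DepthLE d

namespace TreeDepthDecompOn

variable {V : Type*} {G : SimpleGraph V} {A : Finset V}

def insertRoot [DecidableEq V] (P : TreeDepthDecompOn G A) (b : V) :
    TreeDepthDecompOn G (insert b A) where
  le x y := (x = b ∧ y ∈ insert b A) ∨ (x ≠ b ∧ y ≠ b ∧ P.le x y)
  mem_of_le := by
    rintro x y (⟨rfl, hy⟩ | ⟨-, -, hxy⟩)
    · exact ⟨mem_insert_self _ _, hy⟩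
    · exact ⟨mem_insert_of_mem (P.mem_of_le hxy).1, mem_insert_of_mem (P.mem_of_le hxy).2⟩
  le_refl x hx := by
    by_cases hxb : x = b
    · exact .inl ⟨hxb, hx⟩
    · exact .inr ⟨hxb, hxb, P.le_refl x ((mem_insert.1 hx).resolve_left hxb)⟩
  le_trans := by
    rintro x y z (⟨rfl, -⟩ | ⟨hx, hy, hxy⟩) (⟨rfl, hz⟩ | ⟨-, hz, hyz⟩)
    · exact .inl ⟨rfl, hz⟩
    · exact .inl ⟨rfl, mem_insert_of_mem (P.mem_of_le hyz).2⟩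
    · exact absurd rfl hy
    · exact .inr ⟨hx, hz, P.le_trans hxy hyz⟩
  le_antisymm := by
    rintro x y (⟨rfl, -⟩ | ⟨hx, hy, hxy⟩) (⟨rfl, -⟩ | ⟨hy', hx', hyx⟩)
    · rfl
    · exact absurd rfl hx'
    · exact absurd rfl hy
    · exact P.le_antisymm hxy hyx
  ancestors_chain := by
    rintro x y z (⟨rfl, -⟩ | ⟨hx, hz, hxz⟩) (⟨rfl, -⟩ | ⟨hy, -, hyz⟩)
    · exact .inl (.inl ⟨rfl, mem_insert_self _ _⟩)
    · exact .inl (.inl ⟨rfl, mem_insert_of_mem (P.mem_of_le hyz).1⟩)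
    · exact .inr (.inl ⟨rfl, mem_insert_of_mem (P.mem_of_le hxz).1⟩)
    · exact (P.ancestors_chain hxz hyz).imp (.inr ⟨hx, hy, ·⟩) (.inr ⟨hy, hx, ·⟩)
  adj_comparable {u w} hu hw hadj := by
    by_cases hub : u = b
    · exact .inl (.inl ⟨hub, hw⟩)
    by_cases hwb : w = b
    · exact .inr (.inl ⟨hwb, hu⟩)
    exact (P.adj_comparable ((mem_insert.1 hu).resolve_left hub)
      ((mem_insert.1 hw).resolve_left hwb) hadj).imp
      (.inr ⟨hub, hwb, ·⟩) (.inr ⟨hwb, hub, ·⟩)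

theorem depthLE_insertRoot [DecidableEq V] {P : TreeDepthDecompOn G A} {d : ℕ}
    (hP : P.DepthLE d) (b : V) : (P.insertRoot b).DepthLE (d + 1) := by
  intro s hs
  have hchain : #(s.erase b) ≤ d := hP _ fun x hx y hy => by
    rcases hs x (mem_of_mem_erase hx) y (mem_of_mem_erase hy) with
      (⟨rfl, -⟩ | ⟨-, -, h⟩) | (⟨rfl, -⟩ | ⟨-, -, h⟩)
    · exact absurd rfl (ne_of_mem_erase hx)
    · exact .inl h
    · exact absurd rfl (ne_of_mem_erase hy)
    · exact .inr h
  have := pred_card_le_card_erase (a := b) (s := s)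
  omega

end TreeDepthDecompOn

namespace TreeDepthOnLE

variable {V : Type*} {G : SimpleGraph V} {A : Finset V} {d : ℕ}

theorem empty : TreeDepthOnLE G ∅ 0 := by
  refine ⟨⟨fun _ _ => False, by simp, by simp, by simp, by simp, by simp, by simp⟩,
    fun s hs => ?_⟩
  rw [Nat.le_zero, card_eq_zero, eq_empty_iff_forall_notMem]
  intro a ha
  simpa using hs a ha a ha

theorem mono (h : TreeDepthOnLE G A d) {d' : ℕ} (hd : d ≤ d') : TreeDepthOnLE G A d' :=
  let ⟨D, hD⟩ := h
  ⟨D, fun s hs => (hD s hs).trans hd⟩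

theorem of_fibres {ι : Type*} [DecidableEq ι] (f : V → ι)
    (hf : ∀ u ∈ A, ∀ w ∈ A, G.Adj u w → f u = f w)
    (h : ∀ i, TreeDepthOnLE G {v ∈ A | f v = i} d) : TreeDepthOnLE G A d := by
  choose P hP using h
  have mem : ∀ {a b i}, (P i).le a b → a ∈ A ∧ b ∈ A ∧ f a = i ∧ f b = i := by
    intro a b i h
    obtain ⟨ha, hb⟩ := (P _).mem_of_le h
    simp only [mem_filter] at ha hb
    exact ⟨ha.1, hb.1, ha.2, hb.2⟩
  refine ⟨⟨fun a b => (P (f a)).le a b, fun h => ⟨(mem h).1, (mem h).2.1⟩,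
    fun a ha => (P (f a)).le_refl a (mem_filter.2 ⟨ha, rfl⟩), ?_, ?_, ?_, ?_⟩, ?_⟩
  · intro a b c hab hbc
    rw [(mem hab).2.2.2] at hbc
    exact (P _).le_trans hab hbc
  · intro a b hab hba
    rw [(mem hab).2.2.2] at hba
    exact (P _).le_antisymm hab hba
  · intro a b c hac hbc
    have hfb : f b = f a := (mem hbc).2.2.2.symm.trans (mem hac).2.2.2
    show (P (f a)).le a b ∨ (P (f b)).le b a
    rw [hfb] at hbc ⊢
    exact (P _).ancestors_chain hac hbc
  · intro u w hu hw hadj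
    have hfw := (hf u hu w hw hadj).symm
    show (P (f u)).le u w ∨ (P (f w)).le w u
    rw [hfw]
    exact (P _).adj_comparable (mem_filter.2 ⟨hu, rfl⟩) (mem_filter.2 ⟨hw, hfw⟩) hadj
  · intro s hs
    obtain rfl | ⟨a, ha⟩ := s.eq_empty_or_nonempty
    · simp
    have hfs : ∀ b ∈ s, f b = f a := fun b hb => by
      rcases hs a ha b hb with h | h
      · exact (mem h).2.2.2
      · exact (mem h).2.2.2.symm
    refine hP (f a) s fun b hb c hc => ?_
    have : (P (f b)).le b c ∨ (P (f c)).le c b := hs b hb c hc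
    rwa [hfs b hb, hfs c hc] at this

protected theorem insert [DecidableEq V] (h : TreeDepthOnLE G A d) (b : V) :
    TreeDepthOnLE G (insert b A) (d + 1) :=
  let ⟨P, hP⟩ := h
  ⟨P.insertRoot b, P.depthLE_insertRoot hP b⟩

theorem union [DecidableEq V] (h : TreeDepthOnLE G A d) (B : Finset V) :
    TreeDepthOnLE G (A ∪ B) (d + #B) := by
  induction B using Finset.induction_on with
  | empty => simpa using h
  | insert b B hb ih =>
    rw [union_insert, card_insert_of_notMem hb, ← add_assoc]
    exact ih.insert b

end TreeDepthOnLE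

theorem TreeDepthOnLE.exists_treeDepthDecomp {V : Type} [Fintype V] {G : SimpleGraph V} {d : ℕ}
    (h : TreeDepthOnLE G univ d) : ∃ D : TreeDepthDecomp G, D.DepthLE d :=
  let ⟨P, hP⟩ := h
  ⟨⟨P.le, fun a => P.le_refl a (mem_univ a), P.le_trans, P.le_antisymm, P.ancestors_chain,
    P.adj_comparable (mem_univ _) (mem_univ _)⟩, hP⟩

namespace SimpleGraph.IsTree

variable {ι : Type*} {T : SimpleGraph ι} (hT : T.IsTree)

/-- The neighbour of `t` on the path to `s`; junk value `t` when `s = t`. -/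
noncomputable def firstStep (t s : ι) : ι :=
  (hT.existsUnique_path t s).exists.choose.snd

theorem firstStep_eq_snd {t s : ι} {p : T.Walk t s} (hp : p.IsPath) :
    hT.firstStep t s = p.snd := by
  rw [firstStep, (hT.existsUnique_path t s).unique (hT.existsUnique_path t s).exists.choose_spec hp]

theorem adj_firstStep {t s : ι} (hst : s ≠ t) : T.Adj t (hT.firstStep t s) := by
  obtain ⟨p, hp, -⟩ := (hT.connected t s).exists_path_of_dist
  rw [hT.firstStep_eq_snd hp]
  exact Walk.adj_snd (Walk.not_nil_of_ne hst.symm)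

theorem dist_firstStep_lt {t s : ι} (hst : s ≠ t) :
    T.dist (hT.firstStep t s) s < T.dist t s := by
  obtain ⟨p, hp, hlen⟩ := (hT.connected t s).exists_path_of_dist
  rw [hT.firstStep_eq_snd hp, ← hlen, ← p.length_tail_add_one (Walk.not_nil_of_ne hst.symm)]
  exact Nat.lt_succ_of_le (dist_le _)

theorem firstStep_eq_of_adj {t s s' : ι} (hs : s ≠ t) (hs' : s' ≠ t) (h : T.Adj s s') :
    hT.firstStep t s = hT.firstStep t s' := by
  wlog hfar : T.dist t s' = T.dist t s + 1 generalizing s s'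
  · exact (this hs' hs h.symm ((hT.dist_eq_dist_add_one_of_adj t h).resolve_right hfar)).symm
  obtain ⟨p, hp, hlen⟩ := (hT.connected t s).exists_path_of_dist
  have hq : (p.concat h).IsPath :=
    (p.concat h).isPath_of_length_eq_dist (by rw [Walk.length_concat, hlen, hfar])
  rw [hT.firstStep_eq_snd hp, hT.firstStep_eq_snd hq]
  -- the path to `s'` passes through the neighbour `p.snd` of `t`, so that is its second vertex
  refine hT.isAcyclic.eq_snd_of_adj_start hq (p.adj_snd (Walk.not_nil_of_ne hs.symm)) ?_
  rw [Walk.support_concat]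
  exact List.mem_append_left _
    (List.mem_of_mem_tail (p.snd_mem_tail_support (Walk.not_nil_of_ne hs.symm)))

theorem firstStep_eq_of_preconnected {A : Set ι} (hA : (T.induce A).Preconnected) {t : ι}
    (ht : t ∉ A) {s s' : ι} (hs : s ∈ A) (hs' : s' ∈ A) :
    hT.firstStep t s = hT.firstStep t s' := by
  suffices key : ∀ a b : A, (T.induce A).Walk a b → hT.firstStep t a = hT.firstStep t b from
    key ⟨s, hs⟩ ⟨s', hs'⟩ (hA _ _).some
  intro a b p
  induction p with
  | nil => rfl
  | cons hadj _ ih =>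
    exact (hT.firstStep_eq_of_adj (ne_of_mem_of_not_mem (Subtype.prop _) ht)
      (ne_of_mem_of_not_mem (Subtype.prop _) ht) hadj).trans ih

end SimpleGraph.IsTree

namespace TreeDecomp

variable {V ι : Type} {G : SimpleGraph V} {T : SimpleGraph ι} (D : TreeDecomp G T)

noncomputable def distToBags (t : ι) (v : V) : ℕ :=
  sInf (T.dist t '' {i | v ∈ D.bags i})

theorem distToBags_le {t i : ι} {v : V} (hv : v ∈ D.bags i) : D.distToBags t v ≤ T.dist t i :=
  Nat.sInf_le ⟨i, hv, rfl⟩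

theorem exists_dist_eq_distToBags (t : ι) (v : V) :
    ∃ i, v ∈ D.bags i ∧ T.dist t i = D.distToBags t v :=
  Nat.sInf_mem (⟨_, _, (D.covers_vertex v).choose_spec, rfl⟩ : (T.dist t '' _).Nonempty)

/-- The neighbour of `t` through which the bags of `v` are reached (meaningful for
`v ∉ D.bags t`). -/
noncomputable def side (t : ι) (v : V) : ι :=
  D.isTree.firstStep t (D.covers_vertex v).choose

theorem side_eq {t i : ι} {v : V} (hvt : v ∉ D.bags t) (hvi : v ∈ D.bags i) :
    D.side t v = D.isTree.firstStep t i :=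
  D.isTree.firstStep_eq_of_preconnected (D.bags_connected v).preconnected hvt
    (D.covers_vertex v).choose_spec hvi

theorem side_eq_side_of_adj {t : ι} {u w : V} (hu : u ∉ D.bags t) (hw : w ∉ D.bags t)
    (h : G.Adj u w) : D.side t u = D.side t w := by
  obtain ⟨i, hui, hwi⟩ := D.covers_edge h
  rw [D.side_eq hu hui, D.side_eq hw hwi]

/-- Stepping from `t` to `t'` brings the vertices on the side `t'` one step closer to their bags
and moves every other vertex at most one step away. -/
theorem sum_distToBags_lt [DecidableEq V] [DecidableEq ι] {S : Finset V} {t t' : ι}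
    (hheavy : #S < 2 * #{v ∈ S \ D.bags t | D.side t v = t'}) :
    ∑ v ∈ S, D.distToBags t' v < ∑ v ∈ S, D.distToBags t v := by
  set W := {v ∈ S \ D.bags t | D.side t v = t'}
  have hWS : W ⊆ S := fun v hv => (mem_sdiff.1 (mem_filter.1 hv).1).1
  have hcloser : ∀ v ∈ W, D.distToBags t' v + 1 ≤ D.distToBags t v := by
    intro v hv
    obtain ⟨hvS, hside⟩ := mem_filter.1 hv
    have hvt := (mem_sdiff.1 hvS).2
    obtain ⟨i, hvi, hi⟩ := D.exists_dist_eq_distToBags t v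
    have hlt := D.isTree.dist_firstStep_lt (s := i) (t := t) (fun h => hvt (h ▸ hvi))
    rw [← D.side_eq hvt hvi, hside] at hlt
    have := D.distToBags_le (t := t') hvi
    omega
  have hadj : T.Adj t t' := by
    obtain ⟨v, hv⟩ : W.Nonempty := by rw [← card_pos]; omega
    obtain ⟨hvS, hside⟩ := mem_filter.1 hv
    have hvt := (mem_sdiff.1 hvS).2
    obtain ⟨i, hvi⟩ := D.covers_vertex v
    rw [← hside, D.side_eq hvt hvi]
    exact D.isTree.adj_firstStep fun h => hvt (h ▸ hvi)
  have hnear : ∀ v, D.distToBags t' v ≤ D.distToBags t v + 1 := by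
    intro v
    obtain ⟨i, hvi, hi⟩ := D.exists_dist_eq_distToBags t v
    have := D.distToBags_le (t := t') hvi
    have := hadj.diff_dist_adj (u := i)
    rw [SimpleGraph.dist_comm (u := i), SimpleGraph.dist_comm (u := i)] at this
    omega
  have key : ∀ v ∈ S,
      D.distToBags t' v + (if v ∈ W then 2 else 0) ≤ D.distToBags t v + 1 := by
    intro v _
    split_ifs with h
    · linarith [hcloser v h]
    · linarith [hnear v]
  have hsum := sum_le_sum key
  rw [sum_add_distrib, sum_add_distrib, sum_ite_mem, inter_eq_right.2 hWS, sum_const, sum_const,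
    smul_eq_mul, smul_eq_mul] at hsum
  omega

/-- A bag minimising the total distance to the bags of `S` is a balanced separator. -/
theorem exists_balanced_bag [DecidableEq V] [DecidableEq ι] (S : Finset V) :
    ∃ t, ∀ t', 2 * #{v ∈ S \ D.bags t | D.side t v = t'} ≤ #S := by
  have : Nonempty ι := D.isTree.connected.nonempty
  refine ⟨Function.argmin fun t => ∑ v ∈ S, D.distToBags t v, fun t' => ?_⟩
  by_contra! hheavy
  exact Function.not_lt_argmin (fun t => ∑ v ∈ S, D.distToBags t v) t'
    (D.sum_distToBags_lt hheavy)

theorem treeDepthOnLE_of_card_lt_two_pow {k : ℕ} (hk : ∀ i, #(D.bags i) ≤ k + 1)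
    (n : ℕ) {S : Finset V} (hS : #S < 2 ^ n) : TreeDepthOnLE G S ((k + 1) * n) := by
  classical
  induction n generalizing S with
  | zero =>
    rw [card_eq_zero.1 (Nat.lt_one_iff.1 hS)]
    exact .empty
  | succ n ih =>
    obtain ⟨t, ht⟩ := D.exists_balanced_bag S
    have hA : TreeDepthOnLE G (S \ D.bags t) ((k + 1) * n) :=
      .of_fibres (D.side t)
        (fun _ hu _ hw => D.side_eq_side_of_adj (mem_sdiff.1 hu).2 (mem_sdiff.1 hw).2)
        fun t' => ih (by have := ht t'; rw [pow_succ] at hS; omega)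
    have hB : #(S ∩ D.bags t) ≤ k + 1 := (card_le_card inter_subset_right).trans (hk t)
    rw [← sdiff_union_inter S (D.bags t)]
    exact (hA.union _).mono (by rw [mul_add_one]; omega)

end TreeDecomp

theorem TreewidthLE.exists_treeDepthDecomp {V : Type} [Fintype V] {G : SimpleGraph V} {k : ℕ}
    (h : TreewidthLE G k) :
    ∃ D : TreeDepthDecomp G, D.DepthLE ((k + 1) * (Nat.log 2 (Fintype.card V) + 1)) := by
  classical
  obtain ⟨ι, T, D, hk⟩ := h
  refine (D.treeDepthOnLE_of_card_lt_two_pow hk _ ?_).exists_treeDepthDecomp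
  rw [card_univ]
  exact Nat.lt_pow_succ_log_self one_lt_two _

/-- there is an absolute constant `c` such that:
(1) if a graph `G` has a tree decomposition of width `k` whose tree is the rooted full
binary tree of depth `d`, then `G` has tree-depth at most `c·(k+1)·d` (so depth
`O(log n)` yields tree-depth `O(k·log n)`); and consequently
(2) every finite graph `G` on `n` vertices of treewidth at most `k` has tree-depth at most
`c·(k+1)·(log n + 1)`. -/
theorem treedepth_le_const_mul_treewidth_mul_log :
    ∃ c : ℕ,
      (∀ (V : Type) [Fintype V], ∀ (G : SimpleGraph V) (k d : ℕ)
        (D : TreeDecomp G (fullBinTree d)), (∀ t, (D.bags t).card ≤ k + 1) →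
        ∃ D' : TreeDepthDecomp G, D'.DepthLE (c * (k + 1) * d)) ∧
      (∀ (V : Type) [Fintype V], ∀ (G : SimpleGraph V) (k : ℕ),
        TreewidthLE G k →
        ∃ D' : TreeDepthDecomp G,
          D'.DepthLE (c * (k + 1) * (Nat.log 2 (Fintype.card V) + 1))) := by
  refine ⟨1, fun V _ G k d D hk => ?_, fun V _ G k h => ?_⟩
  · simpa only [one_mul] using D.exists_treeDepthDecomp_of_fullBinTree hk
  · simpa only [one_mul] using h.exists_treeDepthDecomp
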